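/- Let n ≥ 1, m ≥ 1, let p, q ∈ (1, ∞) be conjugate exponents, let A be an invertible n×n real matrix, γ ≥ 0, let ω_1, …, ω_m ∈ ℝⁿ, let x, Δx ∈ ℝⁿ with ‖A⁻¹ Δx‖_p ≤ γ, and set D = 2m. Define w ∈ ℝ^D as the vector whose j-th pair of components is √(2/D)(cos(ω_j ⋅ Δx) − 1) and √(2/D) sin(ω_j ⋅ Δx). Define α_j = min(2, (γ ‖A^⊤ ω_j‖_q)²/2) and β_j = min(1, γ ‖A^⊤ ω_j‖_q). Then the ℓ^∞ norm of w satisfies ‖w‖_∞ ≤ √(2/D) max(max_{j} α_j, max_{j} β_j). -/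

import Mathlib

/-!
Write `t_j = ω_j ⬝ Δx`. Inserting `A A⁻¹` gives `t_j = (Aᵀ ω_j) ⬝ (A⁻¹ Δx)`, so Hölder's inequality
bounds `|t_j|` by `γ ‖Aᵀ ω_j‖_q`. The two components of the `j`-th block are `√(2/D)` times
`cos t_j - 1` and `sin t_j`, and `|cos t - 1| ≤ min 2 (t²/2)`, `|sin t| ≤ min 1 |t|`.
-/

open Real Matrix Finset

lemma Real.abs_cos_sub_one_le_min_of_abs_le {t c : ℝ} (h : |t| ≤ c) :
    |cos t - 1| ≤ min 2 (c ^ 2 / 2) := by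
  have hsq : t ^ 2 ≤ c ^ 2 := sq_le_sq' (abs_le.mp h).1 (abs_le.mp h).2
  have := one_sub_sq_div_two_le_cos (x := t)
  rw [abs_of_nonpos (by linarith [cos_le_one t])]
  exact le_min (by linarith [neg_one_le_cos t]) (by linarith)

lemma Real.abs_sin_le_min_of_abs_le {t c : ℝ} (h : |t| ≤ c) : |sin t| ≤ min 1 c :=
  le_min (abs_sin_le_one t) (abs_sin_le_abs.trans h)

theorem Real.abs_inner_le_Lp_mul_Lq {ι : Type*} (s : Finset ι) (f g : ι → ℝ) {p q : ℝ}
    (hpq : p.HolderConjugate q) :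
    |∑ i ∈ s, f i * g i| ≤ (∑ i ∈ s, |f i| ^ p) ^ (1 / p) * (∑ i ∈ s, |g i| ^ q) ^ (1 / q) := by
  refine abs_le.mpr ⟨?_, inner_le_Lp_mul_Lq s f g hpq⟩
  have := inner_le_Lp_mul_Lq s (-f) g hpq
  simp only [Pi.neg_apply, abs_neg, neg_mul, sum_neg_distrib] at this
  linarith

lemma Matrix.dotProduct_eq_transpose_mulVec_dotProduct_inv_mulVec {n R : Type*} [Fintype n]
    [DecidableEq n] [CommRing R] {A : Matrix n n R} (hA : IsUnit A.det) (v u : n → R) :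
    v ⬝ᵥ u = (Aᵀ *ᵥ v) ⬝ᵥ (A⁻¹ *ᵥ u) := by
  rw [mulVec_transpose, ← dotProduct_mulVec, mulVec_mulVec, mul_nonsing_inv A hA, one_mulVec]

lemma Matrix.abs_dotProduct_le_of_Lp_inv_mulVec_le {n : Type*} [Fintype n] [DecidableEq n]
    {p q : ℝ} (hpq : p.HolderConjugate q) {A : Matrix n n ℝ} (hA : IsUnit A.det)
    {γ : ℝ} (v u : n → ℝ) (hu : (∑ k, |(A⁻¹ *ᵥ u) k| ^ p) ^ (1 / p) ≤ γ) :
    |v ⬝ᵥ u| ≤ γ * (∑ k, |(Aᵀ *ᵥ v) k| ^ q) ^ (1 / q) := by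
  rw [dotProduct_eq_transpose_mulVec_dotProduct_inv_mulVec hA, dotProduct_comm]
  calc |∑ k, (A⁻¹ *ᵥ u) k * (Aᵀ *ᵥ v) k|
      ≤ (∑ k, |(A⁻¹ *ᵥ u) k| ^ p) ^ (1 / p) * (∑ k, |(Aᵀ *ᵥ v) k| ^ q) ^ (1 / q) :=
        abs_inner_le_Lp_mul_Lq _ _ _ hpq
    _ ≤ γ * (∑ k, |(Aᵀ *ᵥ v) k| ^ q) ^ (1 / q) := by gcongr

theorem stmt_6_general (n m : ℕ) [NeZero m]
    (p q : ℝ) (hp : 1 < p) (hpq : 1 / p + 1 / q = 1)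
    (A : Matrix (Fin n) (Fin n) ℝ) (hA : IsUnit A.det)
    (γ : ℝ)
    (ω : Fin m → Fin n → ℝ) (Δx : Fin n → ℝ)
    (h : (∑ k, |(A⁻¹ *ᵥ Δx) k| ^ p) ^ (1 / p) ≤ γ)
    (D : ℕ)
    (w : Fin m × Fin 2 → ℝ)
    (hw : ∀ j : Fin m,
      w (j, 0) = Real.sqrt (2 / D) * (Real.cos (∑ k, ω j k * Δx k) - 1) ∧
      w (j, 1) = Real.sqrt (2 / D) * Real.sin (∑ k, ω j k * Δx k))
    (α β : Fin m → ℝ)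
    (hα : ∀ j, α j = min 2 ((γ * (∑ k, |(Aᵀ *ᵥ ω j) k| ^ q) ^ (1 / q)) ^ 2 / 2))
    (hβ : ∀ j, β j = min 1 (γ * (∑ k, |(Aᵀ *ᵥ ω j) k| ^ q) ^ (1 / q))) :
    (Finset.univ.sup' Finset.univ_nonempty fun i : Fin m × Fin 2 => |w i|)
      ≤ Real.sqrt (2 / D) *
        max (Finset.univ.sup' Finset.univ_nonempty α)
            (Finset.univ.sup' Finset.univ_nonempty β) := by
  have hpq' : p.HolderConjugate q := holderConjugate_iff.mpr ⟨hp, by simpa only [one_div] using hpq⟩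
  have hs : 0 ≤ √(2 / D) := sqrt_nonneg _
  refine sup'_le _ _ fun ⟨j, i⟩ _ => ?_
  have ht := abs_dotProduct_le_of_Lp_inv_mulVec_le hpq' hA (ω j) Δx h
  fin_cases i
  · calc |w (j, 0)| = √(2 / D) * |cos (ω j ⬝ᵥ Δx) - 1| := by
          rw [(hw j).1, abs_mul, abs_of_nonneg hs]; rfl
      _ ≤ √(2 / D) * α j := by rw [hα]; gcongr; exact abs_cos_sub_one_le_min_of_abs_le ht
      _ ≤ _ := by gcongr; exact (le_sup' α (mem_univ j)).trans (le_max_left _ _)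
  · calc |w (j, 1)| = √(2 / D) * |sin (ω j ⬝ᵥ Δx)| := by
          rw [(hw j).2, abs_mul, abs_of_nonneg hs]; rfl
      _ ≤ √(2 / D) * β j := by rw [hβ]; gcongr; exact abs_sin_le_min_of_abs_le ht
      _ ≤ _ := by gcongr; exact (le_sup' β (mem_univ j)).trans (le_max_right _ _)

/-- Case `p̄ = ∞` of Proposition 1: the `ℓ^∞` norm of the rotated
random-Fourier-feature uncertainty is bounded by
`√(2/D) max(max_j α_j, max_j β_j)`. -/
theorem stmt_6 (n m : ℕ) (hn : 1 ≤ n) [NeZero m]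
    (p q : ℝ) (hp : 1 < p) (hq : 1 < q) (hpq : 1 / p + 1 / q = 1)
    (A : Matrix (Fin n) (Fin n) ℝ) (hA : IsUnit A.det)
    (γ : ℝ) (hγ : 0 ≤ γ)
    (ω : Fin m → Fin n → ℝ) (x Δx : Fin n → ℝ)
    (h : (∑ k, |(A⁻¹ *ᵥ Δx) k| ^ p) ^ (1 / p) ≤ γ)
    (D : ℕ) (hD : D = 2 * m)
    (w : Fin m × Fin 2 → ℝ)
    (hw : ∀ j : Fin m,
      w (j, 0) = Real.sqrt (2 / D) * (Real.cos (∑ k, ω j k * Δx k) - 1) ∧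
      w (j, 1) = Real.sqrt (2 / D) * Real.sin (∑ k, ω j k * Δx k))
    (α β : Fin m → ℝ)
    (hα : ∀ j, α j = min 2 ((γ * (∑ k, |(Aᵀ *ᵥ ω j) k| ^ q) ^ (1 / q)) ^ 2 / 2))
    (hβ : ∀ j, β j = min 1 (γ * (∑ k, |(Aᵀ *ᵥ ω j) k| ^ q) ^ (1 / q))) :
    (Finset.univ.sup' Finset.univ_nonempty fun i : Fin m × Fin 2 => |w i|)
      ≤ Real.sqrt (2 / D) *
        max (Finset.univ.sup' Finset.univ_nonempty α)
            (Finset.univ.sup' Finset.univ_nonempty β) :=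
  stmt_6_general n m p q hp hpq A hA γ ω Δx h D w hw α β hα hβ
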